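/- arXiv:math/0405465 — 4 statements merged into one kernel-verified Lean document; each statement's English description precedes it below -/
import Mathlib

section
/- Let R be a commutative integral domain and let M be a q × p matrix over R, inducing an R-linear map R^p → R^q (by matrix–vector multiplication). Then the cokernel H = R^q / (range of this map) is a torsion R-module if and only if there exists an injection f : Fin q → Fin p such that the q × q submatrix of M with columns selected by f has nonzero determinant (equivalently, some q × q minor of M is nonzero). -/
/-!
Over the fraction field `K` of `R`, a torsion cokernel means that the columns of `M` span `Kᵠ`,
so some `q` of them form a basis and the corresponding minor is nonzero in `K`, hence in `R`.
Conversely, if `N` is a `q × q` column submatrix of `M` with `det N ≠ 0`, then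
`N * adj N = det N • 1` shows that `det N` kills the cokernel of `N`, which surjects onto
the cokernel of `M`.
-/

theorem Module.isTorsion_quotient_iff {R M : Type*} [CommRing R] [AddCommGroup M] [Module R M]
    (N : Submodule R M) :
    Module.IsTorsion R (M ⧸ N) ↔ ∀ x : M, ∃ a : nonZeroDivisors R, a • x ∈ N := by
  simp only [Module.IsTorsion, N.mkQ_surjective.forall, Submodule.mkQ_apply,
    ← Submodule.Quotient.mk_smul, Submodule.Quotient.mk_eq_zero]

namespace Matrix

variable {l m n R : Type*} [CommRing R] [Fintype n]

theorem range_mulVecLin_submatrix_le [DecidableEq n] [Fintype l] (M : Matrix m n R) (f : l → n) :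
    LinearMap.range (M.submatrix id f).mulVecLin ≤ LinearMap.range M.mulVecLin := by
  have hM : M.submatrix id f = M * (1 : Matrix n n R).submatrix (Equiv.refl n) f := by
    rw [mul_submatrix_one]; rfl
  rw [hM, mulVecLin_mul]
  exact LinearMap.range_comp_le_range _ _

theorem det_smul_mem_range_mulVecLin [DecidableEq n] (N : Matrix n n R) (v : n → R) :
    N.det • v ∈ LinearMap.range N.mulVecLin :=
  ⟨N.adjugate *ᵥ v, by
    rw [mulVecLin_apply, mulVec_mulVec, mul_adjugate, smul_mulVec, one_mulVec]⟩

theorem exists_injective_det_submatrix_ne_zero [Fintype m] [DecidableEq m] {K : Type*} [Field K]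
    (M : Matrix m n K) (hM : LinearMap.range M.mulVecLin = ⊤) :
    ∃ f : m → n, Function.Injective f ∧ (M.submatrix id f).det ≠ 0 := by
  obtain ⟨κ, a, ha, hspan, hli⟩ := exists_linearIndependent' K M.col
  rw [← range_mulVecLin, hM] at hspan
  let e : m ≃ κ := (Pi.basisFun K m).indexEquiv (Module.Basis.mk hli hspan.ge)
  refine ⟨a ∘ e, ha.comp e.injective, ?_⟩
  rw [← isUnit_iff_ne_zero, ← isUnit_iff_isUnit_det, ← linearIndependent_cols_iff_isUnit]
  exact hli.comp e e.injective

theorem range_mulVecLin_map_eq_top_of_isTorsion [IsDomain R] [Fintype m] [DecidableEq m]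
    {K : Type*} [Field K] [Algebra R K] [IsFractionRing R K] (M : Matrix m n R)
    (hM : Module.IsTorsion R ((m → R) ⧸ LinearMap.range M.mulVecLin)) :
    LinearMap.range (M.map (algebraMap R K)).mulVecLin = ⊤ := by
  rw [eq_top_iff, ← (Pi.basisFun K m).span_eq, Submodule.span_le]
  rintro _ ⟨i, rfl⟩
  obtain ⟨a, x, hx⟩ := (Module.isTorsion_quotient_iff _).1 hM (Pi.single i 1)
  have ha : algebraMap R K a ≠ 0 := IsFractionRing.to_map_ne_zero_of_mem_nonZeroDivisors a.2
  refine ⟨(algebraMap R K a)⁻¹ • (algebraMap R K ∘ x), ?_⟩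
  have hx' :
      M.map (algebraMap R K) *ᵥ (algebraMap R K ∘ x) = algebraMap R K a • Pi.single i 1 := by
    funext j
    rw [← RingHom.map_mulVec, ← mulVecLin_apply, hx]
    by_cases hj : j = i <;> simp [hj, Submonoid.smul_def]
  rw [mulVecLin_apply, mulVec_smul, hx', smul_smul, inv_mul_cancel₀ ha, one_smul,
    Pi.basisFun_apply]

end Matrix

/-- Lemma 2.3(2), concrete form: over a commutative domain, the cokernel of a `q × p`
matrix is a torsion module iff some `q × q` minor of the matrix is nonzero. -/
theorem coker_isTorsion_iff_exists_minor_ne_zero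
    {R : Type*} [CommRing R] [IsDomain R] {p q : ℕ}
    (M : Matrix (Fin q) (Fin p) R) :
    Module.IsTorsion R ((Fin q → R) ⧸ LinearMap.range M.mulVecLin) ↔
      ∃ f : Fin q → Fin p, Function.Injective f ∧ (M.submatrix id f).det ≠ 0 := by
  constructor
  · intro hM
    obtain ⟨f, hf, hdet⟩ :=
      (M.map (algebraMap R (FractionRing R))).exists_injective_det_submatrix_ne_zero
        (M.range_mulVecLin_map_eq_top_of_isTorsion hM)
    refine ⟨f, hf, fun h0 => hdet ?_⟩
    rw [Matrix.submatrix_map, ← RingHom.mapMatrix_apply, ← RingHom.map_det, h0, map_zero]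
  · rintro ⟨f, -, hdet⟩
    refine (Module.isTorsion_quotient_iff _).2 fun v =>
      ⟨⟨_, mem_nonZeroDivisors_of_ne_zero hdet⟩, ?_⟩
    exact M.range_mulVecLin_submatrix_le f ((M.submatrix id f).det_smul_mem_range_mulVecLin v)
end

section
/- Let R be a principal ideal domain. Let P be an a × a matrix, Q a b × b matrix, and S a c × c matrix over R, with cokernels coker P = R^a/(range of P), coker Q = R^b/(range of Q), coker S = R^c/(range of S) (each matrix acting by matrix–vector multiplication). Suppose there exist R-linear maps forming a short exact sequence 0 → coker P → coker Q → coker S → 0 (the first map injective, the second surjective, range of the first equal to kernel of the second). Then det Q is associated to (det P)·(det S), i.e. det Q = u·(det P)·(det S) for some unit u of R. -/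
/-!
Over a domain, square matrices presenting the same module have associated determinants: if `A`
and `B` present `M` via `π₁` and `π₂`, lifting each `πᵢ` through the other gives matrices `σ`, `τ`
for which `σ * A` and `1 - σ * τ` are relations of `π₂`, hence multiples `B * X` and `B * Y`.
Then `[[A, τ], [0, 1]] = [[1, 0], [σ, B]] * [[A, τ], [-X, Y]]`, so `det B ∣ det A`, and
symmetrically `det A ∣ det B`.

By the horseshoe construction, presentations `P` of the submodule and `S` of the quotient combine
into a block triangular presentation `[[P, X], [0, S]]` of the middle module, whose determinant is
`det P * det S`; compare it with `Q`.
-/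

open LinearMap

namespace Matrix

section Semiring

variable {R : Type*} [CommSemiring R] {k m n N : Type*} [AddCommMonoid N] [Module R N]

theorem exists_comp_mulVecLin_eq_of_range_le [Fintype n] [DecidableEq n]
    (f : (m → R) →ₗ[R] N) (g : (n → R) →ₗ[R] N) (h : range g ≤ range f) :
    ∃ X : Matrix m n R, f ∘ₗ X.mulVecLin = g := by
  obtain ⟨k, hk⟩ := Module.projective_lifting_property f.rangeRestrict
    (g.codRestrict _ fun v ↦ h ⟨v, rfl⟩) f.surjective_rangeRestrict
  refine ⟨toMatrix' k, ?_⟩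
  rw [← toLin'_apply', toLin'_toMatrix']
  exact LinearMap.ext fun v ↦ congr(($hk v : N))

theorem exists_eq_mul_of_range_le [Fintype k] [DecidableEq k] [Fintype n]
    (X : Matrix m k R) (B : Matrix m n R) (h : range X.mulVecLin ≤ range B.mulVecLin) :
    ∃ Y : Matrix n k R, X = B * Y := by
  obtain ⟨Y, hY⟩ := exists_comp_mulVecLin_eq_of_range_le B.mulVecLin X.mulVecLin h
  refine ⟨Y, toLin'.injective ?_⟩
  rw [toLin'_apply', toLin'_apply', mulVecLin_mul, hY]

end Semiring

variable {R : Type*} [CommRing R] {m n M : Type*} [AddCommGroup M] [Module R M]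

structure IsPresentation [Fintype n] (A : Matrix m n R) (π : (m → R) →ₗ[R] M) : Prop where
  surjective : Function.Surjective π
  ker_eq : ker π = range A.mulVecLin

theorem isPresentation_mkQ [Fintype n] (A : Matrix m n R) :
    A.IsPresentation (range A.mulVecLin).mkQ :=
  ⟨Submodule.mkQ_surjective _, Submodule.ker_mkQ _⟩

theorem det_dvd_det_of_range_le_ker_of_ker_le_range [Fintype n] [DecidableEq n] [Fintype m]
    [DecidableEq m] {A : Matrix n n R} {B : Matrix m m R} {π₁ : (n → R) →ₗ[R] M}
    {π₂ : (m → R) →ₗ[R] M} (h₁ : Function.Surjective π₁) (h₂ : Function.Surjective π₂)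
    (hA : range A.mulVecLin ≤ ker π₁) (hB : ker π₂ ≤ range B.mulVecLin) : B.det ∣ A.det := by
  obtain ⟨σ, hσ⟩ := exists_comp_mulVecLin_eq_of_range_le π₂ π₁ (by simp [range_eq_top.2 h₂])
  obtain ⟨τ, hτ⟩ := exists_comp_mulVecLin_eq_of_range_le π₁ π₂ (by simp [range_eq_top.2 h₁])
  obtain ⟨X, hX⟩ := exists_eq_mul_of_range_le (σ * A) B <| hB.trans' <| range_le_ker_iff.2 <| by
    rw [mulVecLin_mul, ← comp_assoc, hσ, range_le_ker_iff.1 hA]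
  obtain ⟨Y, hY⟩ := exists_eq_mul_of_range_le (1 - σ * τ) B <| hB.trans' <| range_le_ker_iff.2 <| by
    rw [← toLin'_apply', map_sub, toLin'_one, toLin'_mul, comp_sub, ← comp_assoc, toLin'_apply',
      toLin'_apply', hσ, hτ, comp_id, sub_self]
  have hfactor : fromBlocks A τ 0 1 = fromBlocks 1 0 σ B * fromBlocks A τ (-X) Y := by
    rw [fromBlocks_multiply]
    simp [← hX, ← hY]
  refine ⟨(fromBlocks A τ (-X) Y).det, ?_⟩
  simpa [det_fromBlocks_zero₂₁, det_fromBlocks_zero₁₂, det_mul] using congr_arg det hfactor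

theorem IsPresentation.associated_det [IsDomain R] [Fintype n] [DecidableEq n] [Fintype m]
    [DecidableEq m] {A : Matrix n n R} {B : Matrix m m R} {π₁ : (n → R) →ₗ[R] M}
    {π₂ : (m → R) →ₗ[R] M} (hA : A.IsPresentation π₁) (hB : B.IsPresentation π₂) :
    Associated A.det B.det :=
  associated_of_dvd_dvd
    (det_dvd_det_of_range_le_ker_of_ker_le_range hB.surjective hA.surjective hB.ker_eq.ge
      hA.ker_eq.le)
    (det_dvd_det_of_range_le_ker_of_ker_le_range hA.surjective hB.surjective hA.ker_eq.ge
      hB.ker_eq.le)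

section Horseshoe

variable {n' m' M₁ M₂ : Type*} [Fintype n'] [Fintype m'] [AddCommGroup M₁] [Module R M₁]
  [AddCommGroup M₂] [Module R M₂] {φ : M₁ →ₗ[R] M} {ψ : M →ₗ[R] M₂}
  {A : Matrix n n' R} {C : Matrix m m' R} {π₁ : (n → R) →ₗ[R] M₁} {π₂ : (m → R) →ₗ[R] M₂}

theorem isPresentation_fromBlocks (hφ : Function.Injective φ) (hexact : range φ = ker ψ)
    (hA : A.IsPresentation π₁) (hC : C.IsPresentation π₂) {s : (m → R) →ₗ[R] M}
    (hs : ψ ∘ₗ s = π₂) {X : Matrix n m' R}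
    (hX : φ ∘ₗ π₁ ∘ₗ X.mulVecLin = -(s ∘ₗ C.mulVecLin)) :
    (fromBlocks A X 0 C).IsPresentation
      (φ ∘ₗ π₁ ∘ₗ funLeft R R Sum.inl + s ∘ₗ funLeft R R Sum.inr) := by
  have hθ (w : n ⊕ m → R) :
      (φ ∘ₗ π₁ ∘ₗ funLeft R R Sum.inl + s ∘ₗ funLeft R R Sum.inr : (n ⊕ m → R) →ₗ[R] M) w =
        φ (π₁ (w ∘ Sum.inl)) + s (w ∘ Sum.inr) := rfl
  have hψφ (x : M₁) : ψ (φ x) = 0 := by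
    rw [← mem_ker, ← hexact]
    exact mem_range_self φ x
  have hψs (v : m → R) : ψ (s v) = π₂ v := congr($hs v)
  have hXv (v : m' → R) : φ (π₁ (X *ᵥ v)) = -s (C *ᵥ v) := congr($hX v)
  constructor
  · intro y
    obtain ⟨z, hz⟩ := hC.surjective (ψ y)
    obtain ⟨x, hx⟩ : y - s z ∈ range φ := by
      rw [hexact, mem_ker, map_sub, hψs, hz, sub_self]
    obtain ⟨u, rfl⟩ := hA.surjective x
    exact ⟨Sum.elim u z, by rw [hθ, Sum.elim_comp_inl, Sum.elim_comp_inr, hx, sub_add_cancel]⟩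
  ext w
  rw [mem_ker, hθ]
  constructor
  · intro hw
    obtain ⟨v₂, hv₂⟩ : w ∘ Sum.inr ∈ range C.mulVecLin := by
      rw [← hC.ker_eq, mem_ker, ← hψs]
      simpa [hψφ] using congr(ψ $hw)
    obtain ⟨v₁, hv₁⟩ : w ∘ Sum.inl - X *ᵥ v₂ ∈ range A.mulVecLin := by
      rw [← hA.ker_eq, mem_ker, ← hφ.eq_iff, map_sub, map_sub, hXv, map_zero, sub_neg_eq_add,
        ← hw]
      simp [← hv₂]
    refine ⟨Sum.elim v₁ v₂, funext fun i ↦ ?_⟩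
    rcases i with i | i
    · simpa [fromBlocks_mulVec, eq_sub_iff_add_eq] using congr_fun hv₁ i
    · simpa [fromBlocks_mulVec] using congr_fun hv₂ i
  · rintro ⟨v, rfl⟩
    have hAv : π₁ (A *ᵥ (v ∘ Sum.inl)) = 0 := by
      rw [← mem_ker, hA.ker_eq]
      exact mem_range_self _ _
    simp [fromBlocks_mulVec, hAv, hXv]

theorem exists_isPresentation_fromBlocks [Fintype m] [DecidableEq m'] (hφ : Function.Injective φ)
    (hψ : Function.Surjective ψ) (hexact : range φ = ker ψ) (hA : A.IsPresentation π₁)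
    (hC : C.IsPresentation π₂) :
    ∃ (X : Matrix n m' R) (θ : (n ⊕ m → R) →ₗ[R] M), (fromBlocks A X 0 C).IsPresentation θ := by
  obtain ⟨s, hs⟩ := Module.projective_lifting_property ψ π₂ hψ
  obtain ⟨X, hX⟩ := exists_comp_mulVecLin_eq_of_range_le (φ ∘ₗ π₁) (-(s ∘ₗ C.mulVecLin)) <| by
    rw [range_comp_of_range_eq_top _ (range_eq_top.2 hA.surjective), hexact, range_le_ker_iff,
      comp_neg, ← comp_assoc, hs, neg_eq_zero, ← range_le_ker_iff, ← hC.ker_eq]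
  exact ⟨X, _, isPresentation_fromBlocks hφ hexact hA hC hs hX⟩

end Horseshoe

end Matrix

theorem det_associated_of_ses_coker_general
    {R : Type*} [CommRing R] [IsDomain R]
    {a b c : ℕ} (P : Matrix (Fin a) (Fin a) R) (Q : Matrix (Fin b) (Fin b) R)
    (S : Matrix (Fin c) (Fin c) R)
    (h : ∃ (φ : ((Fin a → R) ⧸ LinearMap.range P.mulVecLin) →ₗ[R]
            ((Fin b → R) ⧸ LinearMap.range Q.mulVecLin))
          (ψ : ((Fin b → R) ⧸ LinearMap.range Q.mulVecLin) →ₗ[R]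
            ((Fin c → R) ⧸ LinearMap.range S.mulVecLin)),
          Function.Injective φ ∧ Function.Surjective ψ ∧
            LinearMap.range φ = LinearMap.ker ψ) :
    Associated (P.det * S.det) Q.det := by
  obtain ⟨φ, ψ, hφ, hψ, hexact⟩ := h
  obtain ⟨X, θ, hT⟩ := Matrix.exists_isPresentation_fromBlocks hφ hψ hexact
    (Matrix.isPresentation_mkQ P) (Matrix.isPresentation_mkQ S)
  rw [← Matrix.det_fromBlocks_zero₂₁ P X S]
  exact hT.associated_det (Matrix.isPresentation_mkQ Q)

/-- Lemma 2.3(1), PID case with square presentation matrices: if the cokernels of square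
matrices `P`, `Q`, `S` over a PID fit in a short exact sequence
`0 → coker P → coker Q → coker S → 0`, then `det Q` is associated to `det P · det S`. -/
theorem det_associated_of_ses_coker
    {R : Type*} [CommRing R] [IsDomain R] [IsPrincipalIdealRing R]
    {a b c : ℕ} (P : Matrix (Fin a) (Fin a) R) (Q : Matrix (Fin b) (Fin b) R)
    (S : Matrix (Fin c) (Fin c) R)
    (h : ∃ (φ : ((Fin a → R) ⧸ LinearMap.range P.mulVecLin) →ₗ[R]
            ((Fin b → R) ⧸ LinearMap.range Q.mulVecLin))
          (ψ : ((Fin b → R) ⧸ LinearMap.range Q.mulVecLin) →ₗ[R]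
            ((Fin c → R) ⧸ LinearMap.range S.mulVecLin)),
          Function.Injective φ ∧ Function.Surjective ψ ∧
            LinearMap.range φ = LinearMap.ker ψ) :
    Associated (P.det * S.det) Q.det :=
  det_associated_of_ses_coker_general P Q S h
end

section
/- Let H be a finite abelian group and let G = ℤ × H. Let μ, λ ∈ G, let m₁, m₂ be integers, and set γ = m₁·μ + m₂·λ. Let N be a finite abelian group, and suppose there is an injective group homomorphism from G/⟨γ⟩ into N, where ⟨γ⟩ is the cyclic subgroup generated by γ. Then gcd(m₁, m₂) · |H| divides |N|. -/
/-!
The order of `(ℤ × H) ⧸ ⟨γ⟩` is `|γ.1| · |H|`: the subgroup `L = (0 × H) ⊔ ⟨γ⟩` is the preimage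
of `γ.1 ℤ` under the first projection, so it has index `|γ.1|`, and when `γ.1 ≠ 0` the summand
`0 × H` meets `⟨γ⟩` trivially, so `⟨γ⟩` has index `|H|` in `L`. Since `gcd(m₁, m₂)` divides
`γ.1 = m₁ μ.1 + m₂ λ.1`, it remains to use that the order of a subgroup of `N` divides `|N|`.
-/

section IntProd

variable {H : Type*} [AddCommGroup H]

open AddSubgroup AddMonoidHom

theorem range_inr_sup_zmultiples (γ : ℤ × H) :
    (inr ℤ H).range ⊔ zmultiples γ = (zmultiples γ.1).comap (fst ℤ H) := by
  refine le_antisymm (sup_le ?_ ?_) fun x hx => ?_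
  · rintro _ ⟨y, rfl⟩
    exact (zmultiples γ.1).zero_mem
  · rw [zmultiples_le, mem_comap]
    exact mem_zmultiples _
  · obtain ⟨k, hk⟩ := mem_zmultiples_iff.mp (mem_comap.mp hx)
    have hx : x = inr ℤ H (x.2 - k • γ.2) + k • γ := by
      ext
      · simpa using hk.symm
      · simp
    rw [hx]
    exact add_mem (mem_sup_left (mem_range.mpr ⟨_, rfl⟩)) (mem_sup_right (zsmul_mem_zmultiples γ k))

theorem zmultiples_inf_range_inr {γ : ℤ × H} (hγ : γ.1 ≠ 0) :
    zmultiples γ ⊓ (inr ℤ H).range = ⊥ := by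
  refine eq_bot_iff.mpr fun x ⟨hxγ, y, hy⟩ => ?_
  obtain ⟨k, rfl⟩ := mem_zmultiples_iff.mp hxγ
  have hk : k * γ.1 = 0 := by simpa using congrArg Prod.fst hy.symm
  simp [(mul_eq_zero.mp hk).resolve_right hγ]

theorem index_zmultiples_int_prod (γ : ℤ × H) :
    (zmultiples γ).index = γ.1.natAbs * Nat.card H := by
  have hle : zmultiples γ ≤ (zmultiples γ.1).comap (fst ℤ H) :=
    range_inr_sup_zmultiples γ ▸ le_sup_right
  rw [← relIndex_mul_index hle, index_comap_of_surjective _ Prod.fst_surjective,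
    Int.index_zmultiples, mul_comm]
  rcases eq_or_ne γ.1 0 with h0 | h0
  · simp [h0]
  · have hinr : (inr ℤ H).range ≃ H := (ofInjective (Prod.mk_right_injective 0)).toEquiv.symm
    rw [← range_inr_sup_zmultiples, relIndex_sup_right, ← inf_relIndex_left, inf_comm,
      zmultiples_inf_range_inr h0, relIndex_bot_left, Nat.card_congr hinr]

end IntProd

theorem gcd_mul_card_dvd_of_quotient_embeds_general
    {H : Type*} [AddCommGroup H]
    {N : Type*} [AddCommGroup N]
    (μ lam : ℤ × H) (m₁ m₂ : ℤ)
    (γ : ℤ × H) (hγ : γ = m₁ • μ + m₂ • lam)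
    (h : ∃ φ : ((ℤ × H) ⧸ AddSubgroup.zmultiples γ) →+ N, Function.Injective φ) :
    Int.gcd m₁ m₂ * Nat.card H ∣ Nat.card N := by
  obtain ⟨φ, hφ⟩ := h
  have hgcd : (Int.gcd m₁ m₂ : ℤ) ∣ γ.1 := by
    rw [hγ, Prod.fst_add, Prod.smul_fst, Prod.smul_fst, smul_eq_mul, smul_eq_mul]
    exact dvd_add (Int.gcd_dvd_left m₁ m₂ |>.mul_right _) (Int.gcd_dvd_right m₁ m₂ |>.mul_right _)
  calc Int.gcd m₁ m₂ * Nat.card H ∣ γ.1.natAbs * Nat.card H :=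
        Nat.mul_dvd_mul_right (Int.ofNat_dvd_left.mp hgcd) _
    _ = Nat.card ((ℤ × H) ⧸ AddSubgroup.zmultiples γ) := (index_zmultiples_int_prod γ).symm
    _ ∣ Nat.card N := AddSubgroup.card_dvd_of_injective φ hφ

/-- Algebraic core of Ruberman's proof of Krebes's theorem: if `G = ℤ × H` with `H`
finite abelian, `γ = m₁·μ + m₂·λ`, and `G/⟨γ⟩` embeds into a finite abelian group `N`,
then `gcd(m₁, m₂) · |H|` divides `|N|`. -/
theorem gcd_mul_card_dvd_of_quotient_embeds
    {H : Type*} [AddCommGroup H] [Finite H]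
    {N : Type*} [AddCommGroup N] [Finite N]
    (μ lam : ℤ × H) (m₁ m₂ : ℤ)
    (γ : ℤ × H) (hγ : γ = m₁ • μ + m₂ • lam)
    (h : ∃ φ : ((ℤ × H) ⧸ AddSubgroup.zmultiples γ) →+ N, Function.Injective φ) :
    Int.gcd m₁ m₂ * Nat.card H ∣ Nat.card N :=
  gcd_mul_card_dvd_of_quotient_embeds_general μ lam m₁ m₂ γ hγ h
end

section
/- Let R be a principal ideal domain. Let B be a finitely generated torsion R-module, let A be a submodule of B, and suppose P is an a × a matrix over R whose cokernel R^a/(range of P) is isomorphic to A as an R-module, and Q is a b × b matrix over R whose cokernel R^b/(range of Q) is isomorphic to B as an R-module. Then det P divides det Q in R. -/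
/-!
Lift `A` to the submodule `N` of `Rᵇ` between `range Q` and `Rᵇ` with `N / range Q ≅ A`. Over a
PID, `N` is free, and when `det Q ≠ 0` (otherwise there is nothing to prove) it has rank `b`, so
in a basis of `N` the inclusion `range Q ⊆ N` becomes a square matrix `T` presenting `A`, with
`Q = ι * T` for the matrix `ι` of the inclusion `N ⊆ Rᵇ`; hence `det T ∣ det Q`. Finally, square
presentations of isomorphic modules have determinants dividing each other, so `det P ∣ det T`.
-/

open LinearMap Submodule Matrix

noncomputable def LinearMap.comapQuotientEquivOfSurjective {R M B : Type*} [Ring R]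
    [AddCommGroup M] [Module R M] [AddCommGroup B] [Module R B] (f : M →ₗ[R] B)
    (hf : Function.Surjective f) (A : Submodule R B) :
    (A.comap f ⧸ (ker f).comap (A.comap f).subtype) ≃ₗ[R] A :=
  (quotEquivOfEq _ _ (ker_restrict _).symm).trans <|
    (f.restrict fun _ hx ↦ hx).quotKerEquivOfSurjective fun y ↦ by
      obtain ⟨x, hx⟩ := hf y
      exact ⟨⟨x, show f x ∈ A from hx ▸ y.2⟩, Subtype.ext hx⟩

namespace Matrix

section CommRing

variable {R : Type*} [CommRing R]

theorem exists_mul_eq_of_range_mulVecLin_le {m n k : Type*} [Fintype n] [Fintype k]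
    [DecidableEq k] {M : Matrix m n R} {N : Matrix m k R}
    (h : range N.mulVecLin ≤ range M.mulVecLin) : ∃ D : Matrix n k R, M * D = N := by
  classical
  obtain ⟨g, hg⟩ := Module.projective_lifting_property M.mulVecLin.rangeRestrict
    (N.mulVecLin.codRestrict _ fun x ↦ h (mem_range_self _ x)) M.mulVecLin.surjective_rangeRestrict
  refine ⟨toMatrix' g, toLin'.injective ?_⟩
  rw [toLin'_mul, toLin'_toMatrix', toLin'_apply', toLin'_apply']
  exact LinearMap.ext fun x ↦ congr_arg Subtype.val (LinearMap.congr_fun hg x)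

theorem det_dvd_det_of_range_mulVecLin_le {n : Type*} [Fintype n] [DecidableEq n]
    {M N : Matrix n n R} (h : range N.mulVecLin ≤ range M.mulVecLin) : M.det ∣ N.det := by
  obtain ⟨D, rfl⟩ := exists_mul_eq_of_range_mulVecLin_le h
  exact Dvd.intro _ (det_mul M D).symm

/-- With lifts `U`, `V` of `e` and `e⁻¹`, both block matrices below have column space inside the
kernel of `(x, y) ↦ [x] - e⁻¹ [y]`, and the first one spans it. -/
theorem det_dvd_det_of_quotient_range_equiv {m n : Type*} [Fintype m] [DecidableEq m]
    [Fintype n] [DecidableEq n] (P : Matrix m m R) (S : Matrix n n R)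
    (e : ((m → R) ⧸ range P.mulVecLin) ≃ₗ[R] ((n → R) ⧸ range S.mulVecLin)) :
    P.det ∣ S.det := by
  set πP := (range P.mulVecLin).mkQ
  set πS := (range S.mulVecLin).mkQ
  obtain ⟨U, hU⟩ := Module.projective_lifting_property πS (e.toLinearMap ∘ₗ πP) (mkQ_surjective _)
  obtain ⟨V, hV⟩ :=
    Module.projective_lifting_property πP (e.symm.toLinearMap ∘ₗ πS) (mkQ_surjective _)
  let ψ : (m ⊕ n → R) →ₗ[R] (m → R) ⧸ range P.mulVecLin :=
    πP ∘ₗ funLeft R R Sum.inl - e.symm.toLinearMap ∘ₗ πS ∘ₗ funLeft R R Sum.inr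
  have hker : ker ψ ≤ range (fromBlocks P (toMatrix' V) 0 1).mulVecLin := by
    intro v hv
    have : πP (v ∘ Sum.inl - V (v ∘ Sum.inr)) = 0 := by
      rw [map_sub, ← LinearMap.comp_apply πP V, hV, sub_eq_zero]
      exact sub_eq_zero.1 hv
    obtain ⟨z, hz⟩ := (Quotient.mk_eq_zero _).1 this
    rw [mulVecLin_apply] at hz
    refine ⟨Sum.elim z (v ∘ Sum.inr), ?_⟩
    ext (i | i) <;> simp [fromBlocks_mulVec, hz]
  have hrange : range (fromBlocks 1 0 (toMatrix' U) S).mulVecLin ≤ ker ψ := by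
    rw [range_le_ker_iff]
    refine LinearMap.ext fun w ↦ ?_
    have hSw : πS (S *ᵥ (w ∘ Sum.inr)) = 0 :=
      (Quotient.mk_eq_zero _).2 (mem_range_self S.mulVecLin _)
    have hUw : πS (U (w ∘ Sum.inl)) = e (πP (w ∘ Sum.inl)) := LinearMap.congr_fun hU _
    change πP ((fromBlocks 1 0 (toMatrix' U) S *ᵥ w) ∘ Sum.inl)
      - e.symm (πS ((fromBlocks 1 0 (toMatrix' U) S *ᵥ w) ∘ Sum.inr)) = 0
    simp [fromBlocks_mulVec, hSw, hUw]
  simpa [det_fromBlocks_zero₂₁, det_fromBlocks_zero₁₂] using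
    det_dvd_det_of_range_mulVecLin_le (hrange.trans hker)

end CommRing

variable {R : Type*} [CommRing R] [IsDomain R] [IsPrincipalIdealRing R]

theorem exists_det_dvd_and_quotient_range_equiv_of_range_le {ι : Type*} [Fintype ι]
    [DecidableEq ι] {Q : Matrix ι ι R} (hQ : Q.det ≠ 0) {N : Submodule R (ι → R)}
    (hN : range Q.mulVecLin ≤ N) :
    ∃ T : Matrix ι ι R, T.det ∣ Q.det ∧
      Nonempty (((ι → R) ⧸ range T.mulVecLin) ≃ₗ[R] N ⧸ (range Q.mulVecLin).comap N.subtype) := by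
  obtain ⟨m, c⟩ := N.basisOfPid (Pi.basisFun R ι)
  let Q' : (ι → R) →ₗ[R] N := Q.mulVecLin.codRestrict N fun x ↦ hN (mem_range_self _ x)
  have hQ' : Function.Injective Q' := fun x y hxy ↦
    mulVec_injective_of_det_mem_nonZeroDivisors (mem_nonZeroDivisors_of_ne_zero hQ)
      (congr_arg Subtype.val hxy)
  have hm : Fintype.card ι = m := le_antisymm
    (by simpa [Module.finrank_eq_card_basis c] using Q'.finrank_le_finrank_of_injective hQ')
    (by simpa [Module.finrank_eq_card_basis c] using N.finrank_le)
  let γ := (c.reindex (Fintype.equivFinOfCardEq hm).symm).equivFun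
  refine ⟨toMatrix' (γ.toLinearMap ∘ₗ Q'), ?_, ⟨?_⟩⟩
  · have : toMatrix' (N.subtype ∘ₗ γ.symm.toLinearMap) * toMatrix' (γ.toLinearMap ∘ₗ Q') = Q := by
      rw [← toMatrix'_comp, ← toMatrix'_toLin' Q, toLin'_apply']
      exact congr_arg _ (LinearMap.ext fun x ↦ by simp [Q'])
    exact Dvd.intro_left _ (this ▸ det_mul _ _).symm
  · have : range (toMatrix' (γ.toLinearMap ∘ₗ Q')).mulVecLin = (range Q').map γ.toLinearMap := by
      rw [← toLin'_apply', toLin'_toMatrix', range_comp]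
    rw [range_codRestrict] at this
    exact (quotEquivOfEq _ _ this).trans (Quotient.equiv _ _ γ rfl).symm

end Matrix

theorem det_dvd_det_of_submodule_of_torsion_general
    {R : Type*} [CommRing R] [IsDomain R] [IsPrincipalIdealRing R]
    {B : Type*} [AddCommGroup B] [Module R B] (A : Submodule R B)
    {a b : ℕ} (P : Matrix (Fin a) (Fin a) R) (Q : Matrix (Fin b) (Fin b) R)
    (hP : Nonempty (((Fin a → R) ⧸ LinearMap.range P.mulVecLin) ≃ₗ[R] A))
    (hQ : Nonempty (((Fin b → R) ⧸ LinearMap.range Q.mulVecLin) ≃ₗ[R] B)) :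
    P.det ∣ Q.det := by
  rcases eq_or_ne Q.det 0 with hQ0 | hQ0
  · exact hQ0 ▸ dvd_zero _
  obtain ⟨eP⟩ := hP
  obtain ⟨eQ⟩ := hQ
  let π := eQ.toLinearMap ∘ₗ (range Q.mulVecLin).mkQ
  have hπ : ker π = range Q.mulVecLin := by rw [LinearEquiv.ker_comp, ker_mkQ]
  have hπ_surj : Function.Surjective π := eQ.surjective.comp (mkQ_surjective _)
  have hQA : range Q.mulVecLin ≤ A.comap π := hπ ▸ π.ker_le_comap
  obtain ⟨T, hTQ, ⟨eT⟩⟩ := exists_det_dvd_and_quotient_range_equiv_of_range_le hQ0 hQA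
  rw [← hπ] at eT
  have eA := eT.trans (π.comapQuotientEquivOfSurjective hπ_surj A)
  calc P.det ∣ T.det := det_dvd_det_of_quotient_range_equiv P T (eP.trans eA.symm)
    _ ∣ Q.det := hTQ

/-- Over a PID, if `A` is a submodule of a finitely generated torsion module `B`, and
`P`, `Q` are square matrices presenting `A` and `B` respectively (their cokernels are
isomorphic to `A` and `B`), then `det P` divides `det Q`. -/
theorem det_dvd_det_of_submodule_of_torsion
    {R : Type*} [CommRing R] [IsDomain R] [IsPrincipalIdealRing R]
    {B : Type*} [AddCommGroup B] [Module R B] [Module.Finite R B]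
    (hB : Module.IsTorsion R B) (A : Submodule R B)
    {a b : ℕ} (P : Matrix (Fin a) (Fin a) R) (Q : Matrix (Fin b) (Fin b) R)
    (hP : Nonempty (((Fin a → R) ⧸ LinearMap.range P.mulVecLin) ≃ₗ[R] A))
    (hQ : Nonempty (((Fin b → R) ⧸ LinearMap.range Q.mulVecLin) ≃ₗ[R] B)) :
    P.det ∣ Q.det :=
  det_dvd_det_of_submodule_of_torsion_general A P Q hP hQ
end
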